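/- arXiv:1202.4507 — 4 statements merged into one kernel-verified Lean document; each statement's English description precedes it below -/
import Mathlib

section
/- In the Dubins-Spanier moving-knife protocol with n players, each player receives a piece whose value under that player's own utility function is at least 1/n. -/
/-!
The cut of each round falls at the largest threshold, hence never below the threshold of a
player who is still present. So a player who values the current cake `[0, x s]` at least
`(n - s)/n` loses at most a `1/(n - s)` fraction of that value in the round, and values the
next cake at least `(n - s - 1)/n`. In the round this player wins, they receive exactly a
`1/(n - s)` fraction of a cake worth at least `(n - s)/n` to them; if they are the last player,
they receive a whole cake worth at least `1/n`.
-/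

open MeasureTheory intervalIntegral

theorem sub_one_div_le_sub_div {k n A : ℝ} (hk : 1 ≤ k) (hA : k / n ≤ A) :
    (k - 1) / n ≤ A - A / k := by
  have hk0 : 0 < k := by linarith
  calc (k - 1) / n = k / n * ((k - 1) / k) := by field_simp
    _ ≤ A * ((k - 1) / k) := by gcongr
    _ = A - A / k := by field_simp

theorem integral_le_integral_of_le_left {f : ℝ → ℝ} (hf : 0 ≤ f)
    (hfi : ∀ a b, IntervalIntegrable f volume a b) {t y b : ℝ} (hty : t ≤ y) :
    ∫ z in y..b, f z ≤ ∫ z in t..b, f z := by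
  rw [← integral_add_adjacent_intervals (hfi t y) (hfi y b)]
  have : 0 ≤ ∫ z in t..y, f z := integral_nonneg hty fun z _ => hf z
  linarith

/-- One round of the protocol, seen by a player who does not win it: `t` is the player's
threshold on the cake `[0, a]` with `k` players left, and the cake shrinks to `[0, y]`. -/
theorem sub_one_div_le_integral_of_threshold_le {f : ℝ → ℝ} (hf : 0 ≤ f)
    (hfi : ∀ a b, IntervalIntegrable f volume a b) {k n t y a : ℝ} (hk : 1 ≤ k)
    (hA : k / n ≤ ∫ z in (0 : ℝ)..a, f z) (hty : t ≤ y)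
    (ht : ∫ z in t..a, f z = (∫ z in (0 : ℝ)..a, f z) / k) :
    (k - 1) / n ≤ ∫ z in (0 : ℝ)..y, f z := by
  have hsplit := integral_add_adjacent_intervals (hfi 0 y) (hfi y a)
  have hcut : ∫ z in y..a, f z ≤ (∫ z in (0 : ℝ)..a, f z) / k :=
    ht ▸ integral_le_integral_of_le_left hf hfi hty
  linarith [sub_one_div_le_sub_div hk hA]

theorem div_le_integral_of_thresholds_le {f : ℝ → ℝ} (hf : 0 ≤ f)
    (hfi : ∀ a b, IntervalIntegrable f volume a b) {n r : ℕ} {x : ℕ → ℝ} (hr : r ≤ n)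
    (h0 : ∫ z in (0 : ℝ)..x 0, f z = 1)
    (hthreshold : ∀ s < r, ∃ t ≤ x (s + 1),
      ∫ z in t..x s, f z = (∫ z in (0 : ℝ)..x s, f z) / ((n - s : ℕ) : ℝ)) :
    ∀ s ≤ r, ((n - s : ℕ) : ℝ) / n ≤ ∫ z in (0 : ℝ)..x s, f z := by
  intro s hs
  induction s with
  | zero => simpa [h0] using div_self_le_one (n : ℝ)
  | succ s ih =>
    obtain ⟨t, hty, ht⟩ := hthreshold s hs
    have hk : ((n - (s + 1) : ℕ) : ℝ) = ((n - s : ℕ) : ℝ) - 1 := by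
      rw [Nat.sub_succ', Nat.cast_pred (by omega)]
    rw [hk]
    exact sub_one_div_le_integral_of_threshold_le hf hfi (by norm_cast; omega)
      (ih (by omega)) hty ht

/-- Round `r` is won by `σ r` and played on the cake `[0, x r]`; its winner receives
`[x (r + 1), x r]`, so the last player `σ (n - 1)` receives `[x n, x (n - 1)] = [0, x (n - 1)]`. -/
theorem stmt3_general (n : ℕ) (u : Fin n → ℝ → ℝ)
    (hcont : ∀ i, Continuous (u i)) (hpos : ∀ i z, 0 < u i z)
    (hone : ∀ i, (∫ z in (0:ℝ)..1, u i z) = 1)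
    (σ : Equiv.Perm (Fin n)) (x : ℕ → ℝ)
    (hx0 : x 0 = 1) (hxn : x n = 0)
    (hwin : ∀ r : Fin n, (r : ℕ) < n - 1 →
      (∫ z in (x ((r : ℕ) + 1))..(x (r : ℕ)), u (σ r) z) =
        (∫ z in (0:ℝ)..(x (r : ℕ)), u (σ r) z) / ((n - (r : ℕ) : ℕ) : ℝ))
    (hmax : ∀ r : Fin n, (r : ℕ) < n - 1 → ∀ i : Fin n, (r : ℕ) ≤ ((σ.symm i : Fin n) : ℕ) →
      ∃ t : ℝ, t ∈ Set.Ico (0:ℝ) (x (r : ℕ)) ∧ t ≤ x ((r : ℕ) + 1) ∧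
        (∫ z in t..(x (r : ℕ)), u i z) =
          (∫ z in (0:ℝ)..(x (r : ℕ)), u i z) / ((n - (r : ℕ) : ℕ) : ℝ)) :
    ∀ i : Fin n,
      (1 : ℝ) / n ≤ ∫ z in (x (((σ.symm i : Fin n) : ℕ) + 1))..(x ((σ.symm i : Fin n) : ℕ)), u i z := by
  intro i
  set r := σ.symm i with hr
  have hrn : (r : ℕ) < n := r.isLt
  have hvalue : ((n - r : ℕ) : ℝ) / n ≤ ∫ z in (0 : ℝ)..x r, u i z := by
    refine div_le_integral_of_thresholds_le (fun z => (hpos i z).le)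
      (fun a b => (hcont i).intervalIntegrable a b) hrn.le (hx0 ▸ hone i) (fun s hs => ?_)
      r le_rfl
    obtain ⟨t, -, hty, ht⟩ := hmax ⟨s, by omega⟩ (by simp only; omega) i hs.le
    exact ⟨t, hty, ht⟩
  rcases Nat.lt_or_ge r (n - 1) with hwinner | hlast
  · have hk : (0 : ℝ) < (n - r : ℕ) := by norm_cast; omega
    have hpiece := hwin r hwinner
    rw [hr, σ.apply_symm_apply] at hpiece
    rw [hpiece, le_div_iff₀ hk, div_mul_eq_mul_div, one_mul]
    exact hvalue
  · have hnext : (r : ℕ) + 1 = n := by omega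
    have hk : n - (r : ℕ) = 1 := by omega
    simpa [hnext, hxn, hk] using hvalue

/-- Simple fairness of the Dubins-Spanier moving-knife protocol. Players are
`Fin n`, player `i` has utility density `u i` (positive, continuous, integrating to 1 on
[0,1]). An execution of the protocol is a permutation `σ` (the winner of round `r` is `σ r`)
together with cut points `x : ℕ → ℝ`, `x 0 = 1`, `x n = 0`, decreasing; in each round
`r < n - 1` with `n - r` players remaining and cake `[0, x r]`, every remaining player `i`
(one with `σ.symm i ≥ r`) has a threshold `t` with `μᵢ([t, x r]) = μᵢ([0, x r])/(n-r)` and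
`t ≤ x (r+1)`, and the winner's threshold is exactly `x (r+1)`; the winner of round `r`
receives `[x (r+1), x r]` (the last player receives `[0, x (n-1)] = [x n, x (n-1)]`).
Then every player values their own piece at least `1/n`. -/
theorem stmt3 (n : ℕ) (hn : 1 ≤ n) (u : Fin n → ℝ → ℝ)
    (hcont : ∀ i, Continuous (u i)) (hpos : ∀ i z, 0 < u i z)
    (hone : ∀ i, (∫ z in (0:ℝ)..1, u i z) = 1)
    (σ : Equiv.Perm (Fin n)) (x : ℕ → ℝ)
    (hx0 : x 0 = 1) (hxn : x n = 0)
    (hdec : ∀ r : ℕ, r < n → 0 ≤ x (r + 1) ∧ x (r + 1) < x r)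
    (hwin : ∀ r : Fin n, (r : ℕ) < n - 1 →
      (∫ z in (x ((r : ℕ) + 1))..(x (r : ℕ)), u (σ r) z) =
        (∫ z in (0:ℝ)..(x (r : ℕ)), u (σ r) z) / ((n - (r : ℕ) : ℕ) : ℝ))
    (hmax : ∀ r : Fin n, (r : ℕ) < n - 1 → ∀ i : Fin n, (r : ℕ) ≤ ((σ.symm i : Fin n) : ℕ) →
      ∃ t : ℝ, t ∈ Set.Ico (0:ℝ) (x (r : ℕ)) ∧ t ≤ x ((r : ℕ) + 1) ∧
        (∫ z in t..(x (r : ℕ)), u i z) =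
          (∫ z in (0:ℝ)..(x (r : ℕ)), u i z) / ((n - (r : ℕ) : ℕ) : ℝ)) :
    ∀ i : Fin n,
      (1 : ℝ) / n ≤ ∫ z in (x (((σ.symm i : Fin n) : ℕ) + 1))..(x ((σ.symm i : Fin n) : ℕ)), u i z :=
  stmt3_general n u hcont hpos hone σ x hx0 hxn hwin hmax
end

section
/- The Sgall-Woeginger protocol is simply fair: every player receives a piece of value at least 1/n under their own utility. -/
/-!
A player `i` who wins in round `k` gets `[y k, X i (k + 1)]`: for the last player this is because
`y n = 1 = X i n`. Since `i` was still present in round `k - 1`, the cut made there is at most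
`i`'s mark, `y k ≤ X i k`. Hence the piece contains `[X i k, X i (k + 1)]`, of value `1 / n`,
and a positive density only gains value on the larger interval.
-/

open intervalIntegral

theorem integral_le_integral_of_le_left_s6 {f : ℝ → ℝ} {a b c : ℝ} (hab : a ≤ b)
    (hf : ∀ x ∈ Set.Icc a b, 0 ≤ f x) (hfab : IntervalIntegrable f MeasureTheory.volume a b)
    (hfbc : IntervalIntegrable f MeasureTheory.volume b c) :
    ∫ x in b..c, f x ≤ ∫ x in a..c, f x := by
  rw [← integral_add_adjacent_intervals hfab hfbc]
  have hnonneg : 0 ≤ ∫ x in a..b, f x := integral_nonneg hab hf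
  linarith

namespace SgallWoeginger

variable {n : ℕ} {X : Fin n → ℕ → ℝ} {σ : Equiv.Perm (Fin n)} {y : ℕ → ℝ}

theorem cut_succ_eq_mark (hXn : ∀ i, X i n = 1) (hyn : y n = 1)
    (hwin : ∀ r : Fin n, (r : ℕ) < n - 1 → y ((r : ℕ) + 1) = X (σ r) ((r : ℕ) + 1))
    (i : Fin n) : y (σ.symm i + 1) = X i (σ.symm i + 1) := by
  by_cases hlast : (σ.symm i : ℕ) < n - 1
  · simpa using hwin (σ.symm i) hlast
  · have hk : (σ.symm i : ℕ) + 1 = n := by omega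
    rw [hk, hyn, hXn]

theorem cut_le_mark (hX0 : ∀ i, X i 0 = 0) (hy0 : y 0 = 0)
    (hmin : ∀ r : Fin n, (r : ℕ) < n - 1 → ∀ i : Fin n, (r : ℕ) ≤ ((σ.symm i : Fin n) : ℕ) →
      y ((r : ℕ) + 1) ≤ X i ((r : ℕ) + 1))
    (i : Fin n) : y (σ.symm i) ≤ X i (σ.symm i) := by
  have hlt := (σ.symm i).isLt
  cases hk : (σ.symm i : ℕ) with
  | zero => simp [hX0, hy0]
  | succ r => exact hmin ⟨r, by omega⟩ (by simp only; omega) i (by simp only; omega)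

end SgallWoeginger

open SgallWoeginger in
theorem stmt6_general (n : ℕ) (u : Fin n → ℝ → ℝ)
    (hcont : ∀ i, Continuous (u i)) (hpos : ∀ i z, 0 < u i z)
    (X : Fin n → ℕ → ℝ)
    (hX0 : ∀ i, X i 0 = 0) (hXn : ∀ i, X i n = 1)
    (hmark : ∀ i, ∀ j : ℕ, j < n →
      (∫ z in (X i j)..(X i (j + 1)), u i z) = 1 / n)
    (σ : Equiv.Perm (Fin n)) (y : ℕ → ℝ)
    (hy0 : y 0 = 0) (hyn : y n = 1)
    (hwin : ∀ r : Fin n, (r : ℕ) < n - 1 → y ((r : ℕ) + 1) = X (σ r) ((r : ℕ) + 1))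
    (hmin : ∀ r : Fin n, (r : ℕ) < n - 1 → ∀ i : Fin n, (r : ℕ) ≤ ((σ.symm i : Fin n) : ℕ) →
      y ((r : ℕ) + 1) ≤ X i ((r : ℕ) + 1)) :
    ∀ i : Fin n,
      (1 : ℝ) / n ≤ ∫ z in (y ((σ.symm i : Fin n) : ℕ))..(y (((σ.symm i : Fin n) : ℕ) + 1)), u i z := by
  intro i
  calc (1 : ℝ) / n = ∫ z in (X i (σ.symm i))..(X i (σ.symm i + 1)), u i z :=
        (hmark i _ (σ.symm i).isLt).symm
    _ ≤ ∫ z in (y (σ.symm i))..(X i (σ.symm i + 1)), u i z :=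
        integral_le_integral_of_le_left_s6 (cut_le_mark hX0 hy0 hmin i)
          (fun z _ => (hpos i z).le) ((hcont i).intervalIntegrable _ _)
          ((hcont i).intervalIntegrable _ _)
    _ = _ := by rw [cut_succ_eq_mark hXn hyn hwin i]

/-- Simple fairness of the Sgall-Woeginger protocol. Each player `i` declares
marks `X i 0 = 0 < X i 1 < ... < X i n = 1` with `μᵢ([X i j, X i (j+1)]) = 1/n`. An execution
is a permutation `σ` (winner of round `r` is `σ r`) and cut points `y : ℕ → ℝ`, `y 0 = 0`,
`y n = 1`, where in round `r < n - 1` the cut `y (r+1)` equals the winner's mark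
`X (σ r) (r+1)` and is minimal among the marks `X i (r+1)` of remaining players
(those with `σ.symm i ≥ r`); the winner of round `r` receives `[y r, y (r+1)]` and the
last player receives `[y (n-1), y n] = [y (n-1), 1]`. Then every player values their own
piece at least `1/n`. -/
theorem stmt6 (n : ℕ) (hn : 1 ≤ n) (u : Fin n → ℝ → ℝ)
    (hcont : ∀ i, Continuous (u i)) (hpos : ∀ i z, 0 < u i z)
    (X : Fin n → ℕ → ℝ)
    (hX0 : ∀ i, X i 0 = 0) (hXn : ∀ i, X i n = 1)
    (hXinc : ∀ i, ∀ j : ℕ, j < n → X i j < X i (j + 1))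
    (hmark : ∀ i, ∀ j : ℕ, j < n →
      (∫ z in (X i j)..(X i (j + 1)), u i z) = 1 / n)
    (σ : Equiv.Perm (Fin n)) (y : ℕ → ℝ)
    (hy0 : y 0 = 0) (hyn : y n = 1)
    (hwin : ∀ r : Fin n, (r : ℕ) < n - 1 → y ((r : ℕ) + 1) = X (σ r) ((r : ℕ) + 1))
    (hmin : ∀ r : Fin n, (r : ℕ) < n - 1 → ∀ i : Fin n, (r : ℕ) ≤ ((σ.symm i : Fin n) : ℕ) →
      y ((r : ℕ) + 1) ≤ X i ((r : ℕ) + 1)) :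
    ∀ i : Fin n,
      (1 : ℝ) / n ≤ ∫ z in (y ((σ.symm i : Fin n) : ℕ))..(y (((σ.symm i : Fin n) : ℕ) + 1)), u i z :=
  stmt6_general n u hcont hpos X hX0 hXn hmark σ y hy0 hyn hwin hmin
end

section
/- In the Endriss counterexample with utilities u₂ ≡ 1 and u₃ as given, if in the second round (cake [0,5/6], 2 players) player 2 truthfully declares 5/12 it obtains utility 5/12, but if player 2 falsely declares 1/3 it wins with piece [1/3, 5/6] and obtains utility 1/2 > 5/12. Hence truth-telling is not optimal. -/
open intervalIntegral Set

lemma integral_ite_le_of_le {a b c p q : ℝ} (hac : a ≤ c) (hcb : c ≤ b) :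
    (∫ z in a..b, (if z ≤ c then p else q)) = p * (c - a) + q * (b - c) := by
  have left : EqOn (fun z => if z ≤ c then p else q) (fun _ => p) (uIoc a c) := by
    intro z hz
    rw [uIoc_of_le hac] at hz
    exact if_pos hz.2
  have right : EqOn (fun z => if z ≤ c then p else q) (fun _ => q) (uIoc c b) := by
    intro z hz
    rw [uIoc_of_le hcb] at hz
    exact if_neg (not_le.2 hz.1)
  rw [← integral_add_adjacent_intervals (intervalIntegrable_const.congr left.symm)
      (intervalIntegrable_const.congr right.symm),
    integral_congr_ae (Filter.Eventually.of_forall fun _ hz => left hz),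
    integral_congr_ae (Filter.Eventually.of_forall fun _ hz => right hz)]
  simp only [intervalIntegral.integral_const, smul_eq_mul]
  ring

/-- Endriss counterexample. With u₂ ≡ 1 and u₃ as in the paper, in the second
round (cake [0,5/6], two players): player 3's honest declaration is 11/48 (characterized by
∫_{11/48}^{5/6} u₃ = (1/2)∫₀^{5/6} u₃); player 2's truthful declaration 5/12 yields utility
μ₂([5/12,5/6]) = 5/12, while the false declaration 1/3 beats 11/48 and yields
μ₂([1/3,5/6]) = 1/2 > 5/12; hence truth-telling is not optimal. -/
theorem stmt10 :
    (∫ z in (11/48 : ℝ)..(5/6), (if z ≤ 1/3 then (2:ℝ) else 1/2)) =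
      (1/2) * (∫ z in (0:ℝ)..(5/6), (if z ≤ 1/3 then (2:ℝ) else 1/2)) ∧
    (∫ z in (5/12 : ℝ)..(5/6), (1:ℝ)) = 5/12 ∧
    (11/48 : ℝ) < 1/3 ∧
    (∫ z in (1/3 : ℝ)..(5/6), (1:ℝ)) = 1/2 ∧
    (5/12 : ℝ) < 1/2 := by
  refine ⟨?_, ?_, by norm_num, ?_, by norm_num⟩
  · rw [integral_ite_le_of_le (by norm_num) (by norm_num),
      integral_ite_le_of_le (by norm_num) (by norm_num)]
    norm_num
  all_goals
    rw [intervalIntegral.integral_const, smul_eq_mul]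
    norm_num
end

section
/- If in each of the first j rounds of the Dubins-Spanier protocol player i does not win, then player i's value for the cake remaining after round j is at least (n−j)/n, and strictly greater if some winner's cut strictly exceeded player i's threshold in some round. -/
/-!
A player who has not yet won keeps, after a round with `k` players, everything except the piece
`[tᵢ, x]` they value at `1/k` of the current cake, plus the (nonnegative) value of `[tᵢ, x']` lying
between their own threshold and the winner's cut `x' ≥ tᵢ`. Hence a share `≥ k/n` becomes a share
`≥ (k/n)(1 - 1/k) = (k-1)/n`, strictly so if the share was strict or `tᵢ < x'`.
-/

theorem sub_one_div_le_sub_div_of_div_le {k n V : ℝ} (hk : 1 ≤ k) (hV : k / n ≤ V) :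
    (k - 1) / n ≤ V - V / k := by
  have hk0 : k ≠ 0 := by positivity
  have hfac : 0 ≤ 1 - k⁻¹ := sub_nonneg.mpr (inv_le_one_of_one_le₀ hk)
  calc (k - 1) / n = k / n * (1 - k⁻¹) := by field_simp
    _ ≤ V * (1 - k⁻¹) := by gcongr
    _ = V - V / k := by ring

theorem sub_one_div_lt_sub_div_of_div_lt {k n V : ℝ} (hk : 1 < k) (hV : k / n < V) :
    (k - 1) / n < V - V / k := by
  have hk0 : k ≠ 0 := by positivity
  have hfac : 0 < 1 - k⁻¹ := sub_pos.mpr (inv_lt_one_of_one_lt₀ hk)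
  calc (k - 1) / n = k / n * (1 - k⁻¹) := by field_simp
    _ < V * (1 - k⁻¹) := by gcongr
    _ = V - V / k := by ring

theorem integral_eq_sub_add_of_continuous {f : ℝ → ℝ} (hf : Continuous f) (p a b c : ℝ) :
    ∫ z in p..b, f z = (∫ z in p..c, f z) - (∫ z in a..c, f z) + ∫ z in a..b, f z := by
  rw [← intervalIntegral.integral_add_adjacent_intervals
      (hf.intervalIntegrable p a) (hf.intervalIntegrable a b),
    ← intervalIntegral.integral_add_adjacent_intervals
      (hf.intervalIntegrable p a) (hf.intervalIntegrable a c)]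
  ring

theorem integral_share_step {f : ℝ → ℝ} (hf : Continuous f) (hpos : ∀ z, 0 < f z)
    {a b c k n : ℝ} (hab : a ≤ b) (hk : 1 < k)
    (hcut : ∫ z in a..c, f z = (∫ z in (0:ℝ)..c, f z) / k)
    (hV : k / n ≤ ∫ z in (0:ℝ)..c, f z) :
    (k - 1) / n ≤ ∫ z in (0:ℝ)..b, f z ∧
    (k / n < ∫ z in (0:ℝ)..c, f z ∨ a < b → (k - 1) / n < ∫ z in (0:ℝ)..b, f z) := by
  rw [integral_eq_sub_add_of_continuous hf 0 a b c, hcut]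
  have hrest : 0 ≤ ∫ z in a..b, f z :=
    intervalIntegral.integral_nonneg hab fun z _ => (hpos z).le
  have hle := sub_one_div_le_sub_div_of_div_le hk.le hV
  refine ⟨by linarith, ?_⟩
  rintro (hlt | hlt)
  · linarith [sub_one_div_lt_sub_div_of_div_lt hk hlt]
  · have hrest_pos : 0 < ∫ z in a..b, f z :=
      intervalIntegral.intervalIntegral_pos_of_pos (hf.intervalIntegrable a b) hpos hlt
    linarith

theorem stmt17_general (n : ℕ) (u : Fin n → ℝ → ℝ)
    (hcont : ∀ i, Continuous (u i)) (hpos : ∀ i z, 0 < u i z)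
    (hone : ∀ i, (∫ z in (0:ℝ)..1, u i z) = 1)
    (σ : Equiv.Perm (Fin n)) (x : ℕ → ℝ) (t : Fin n → ℕ → ℝ)
    (hx0 : x 0 = 1)
    (hthr : ∀ (i : Fin n) (r : ℕ), r < n - 1 → r ≤ ((σ.symm i : Fin n) : ℕ) →
      t i r ∈ Set.Ico (0:ℝ) (x r) ∧ t i r ≤ x (r + 1) ∧
      (∫ z in (t i r)..(x r), u i z) = (∫ z in (0:ℝ)..(x r), u i z) / ((n - r : ℕ) : ℝ)) :
    ∀ j : ℕ, j ≤ n - 1 → ∀ i : Fin n, j ≤ ((σ.symm i : Fin n) : ℕ) →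
      (((n - j : ℕ) : ℝ) / n ≤ ∫ z in (0:ℝ)..(x j), u i z) ∧
      ((∃ r : ℕ, r < j ∧ t i r < x (r + 1)) →
        ((n - j : ℕ) : ℝ) / n < ∫ z in (0:ℝ)..(x j), u i z) := by
  intro j
  induction j with
  | zero =>
    intro _ i _
    refine ⟨?_, fun ⟨r, hr, _⟩ => absurd hr r.not_lt_zero⟩
    simpa [hx0, hone i] using div_self_le_one (n : ℝ)
  | succ j ih =>
    intro hj i hi
    obtain ⟨ih_le, ih_lt⟩ := ih (by omega) i (by omega)
    obtain ⟨-, hcut_le, hcut⟩ := hthr i j (by omega) (by omega)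
    have hk : (1 : ℝ) < ((n - j : ℕ) : ℝ) := by exact_mod_cast (by omega : 1 < n - j)
    have hk_succ : ((n - (j + 1) : ℕ) : ℝ) = ((n - j : ℕ) : ℝ) - 1 := by
      rw [show n - (j + 1) = n - j - 1 by omega, Nat.cast_sub (by omega : 1 ≤ n - j), Nat.cast_one]
    obtain ⟨step_le, step_lt⟩ := integral_share_step (hcont i) (hpos i) hcut_le hk hcut ih_le
    rw [hk_succ]
    refine ⟨step_le, fun ⟨r, hr, hcut_lt⟩ => step_lt ?_⟩
    rcases Nat.lt_succ_iff_lt_or_eq.mp hr with hr | rfl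
    · exact Or.inl (ih_lt ⟨r, hr, hcut_lt⟩)
    · exact Or.inr hcut_lt

/-- In the Dubins-Spanier protocol (setup as in stmt3, with threshold function
`t i r` for player `i` in round `r`), if player `i` does not win any of the first `j` rounds,
then `μᵢ([0, x j]) ≥ (n − j)/n`; the inequality is strict if in some earlier round the
winner's cut strictly exceeded player i's threshold. -/
theorem stmt17 (n : ℕ) (hn : 1 ≤ n) (u : Fin n → ℝ → ℝ)
    (hcont : ∀ i, Continuous (u i)) (hpos : ∀ i z, 0 < u i z)
    (hone : ∀ i, (∫ z in (0:ℝ)..1, u i z) = 1)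
    (σ : Equiv.Perm (Fin n)) (x : ℕ → ℝ) (t : Fin n → ℕ → ℝ)
    (hx0 : x 0 = 1) (hxn : x n = 0)
    (hdec : ∀ r : ℕ, r < n → 0 ≤ x (r + 1) ∧ x (r + 1) < x r)
    (hthr : ∀ (i : Fin n) (r : ℕ), r < n - 1 → r ≤ ((σ.symm i : Fin n) : ℕ) →
      t i r ∈ Set.Ico (0:ℝ) (x r) ∧ t i r ≤ x (r + 1) ∧
      (∫ z in (t i r)..(x r), u i z) = (∫ z in (0:ℝ)..(x r), u i z) / ((n - r : ℕ) : ℝ))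
    (hwin : ∀ r : Fin n, (r : ℕ) < n - 1 → x ((r : ℕ) + 1) = t (σ r) (r : ℕ)) :
    ∀ j : ℕ, j ≤ n - 1 → ∀ i : Fin n, j ≤ ((σ.symm i : Fin n) : ℕ) →
      (((n - j : ℕ) : ℝ) / n ≤ ∫ z in (0:ℝ)..(x j), u i z) ∧
      ((∃ r : ℕ, r < j ∧ t i r < x (r + 1)) →
        ((n - j : ℕ) : ℝ) / n < ∫ z in (0:ℝ)..(x j), u i z) :=
  stmt17_general n u hcont hpos hone σ x t hx0 hthr
end
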